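/- arXiv:2605.08287 — 3 statements merged into one kernel-verified Lean document; each statement's English description precedes it below -/
import Mathlib

section
/- Let X_1, …, X_n be independent random variables in [0,1] with means μ_i and variances σ_i², and let i* maximize μ_i with μ* = μ_{i*}, Δ_i = μ* − μ_i. Then E[max_i X_i] − μ* ≥ (1/(2n)) · Σ_{i : Δ_i > 0} max{σ_i² − Δ_i, 0}. -/
open MeasureTheory ProbabilityTheory

/-! Write `m = E X_{i*}`. Pointwise `max_j X_j - X_{i*} ≥ (X_i - X_{i*})₊` for every `i`, so `n`
times the gap dominates `∑ᵢ E (X_i - X_{i*})₊`. For `i ≠ i*`, independence gives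
`E (X_i - X_{i*})₊ ≥ E (X_i - m)₊` (Jensen in the second variable). Finally, for `Y, c ∈ [0,1]`,
`2 (Y - c)₊ = (Y - c) + |Y - c| ≥ (Y - c) + (Y - c)²`, whose expectation is at least
`Var Y - (c - E Y)`. -/

lemma sq_add_le_two_mul_max_zero {t : ℝ} (ht : |t| ≤ 1) : t ^ 2 + t ≤ 2 * max t 0 := by
  rcases le_total t 0 with h | h
  · rw [max_eq_right h]; nlinarith [abs_le.mp ht]
  · rw [max_eq_left h]; nlinarith [abs_le.mp ht]

lemma sum_max_sub_zero_le_card_mul_sup'_sub {ι : Type*} (s : Finset ι) (f : ι → ℝ) {j : ι}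
    (hj : j ∈ s) :
    ∑ i ∈ s, max (f i - f j) 0 ≤ s.card * (s.sup' ⟨j, hj⟩ f - f j) := by
  rw [← nsmul_eq_mul]
  refine Finset.sum_le_card_nsmul _ _ _ fun i hi => max_le ?_ ?_
  · linarith [Finset.le_sup' f hi]
  · linarith [Finset.le_sup' f hj]

section

variable {Ω : Type*} [MeasurableSpace Ω] {μ : Measure Ω}

lemma integrable_finsetSup' {ι : Type*} {s : Finset ι} (hs : s.Nonempty) {X : ι → Ω → ℝ}
    (hX : ∀ i ∈ s, Integrable (X i) μ) :
    Integrable (fun ω => s.sup' hs (fun i => X i ω)) μ := by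
  have : (fun ω => s.sup' hs (fun i => X i ω)) = s.sup' hs X := by
    funext ω; exact (Finset.sup'_apply _ _ ω).symm
  rw [this]
  exact Finset.sup'_induction (p := fun f => Integrable f μ) hs X (fun _ hf _ hg => hf.sup hg) hX

lemma sum_integral_max_sub_zero_le_card_mul {ι : Type*} [Fintype ι] {X : ι → Ω → ℝ}
    (hX : ∀ i, Integrable (X i) μ) (j : ι) :
    ∑ i, ∫ ω, max (X i ω - X j ω) 0 ∂μ
      ≤ Fintype.card ι * ((∫ ω, Finset.univ.sup' ⟨j, Finset.mem_univ j⟩ (fun i => X i ω) ∂μ)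
        - ∫ ω, X j ω ∂μ) := by
  have hM := integrable_finsetSup' ⟨j, Finset.mem_univ j⟩ fun i _ => hX i
  have hpos : ∀ i, Integrable (fun ω => max (X i ω - X j ω) 0) μ := fun i =>
    ((hX i).sub (hX j)).pos_part
  rw [← integral_finsetSum _ fun i _ => hpos i, ← integral_sub hM (hX j), ← integral_const_mul]
  exact integral_mono (integrable_finsetSum _ fun i _ => hpos i)
    ((hM.sub (hX j)).const_mul _)
    fun ω => sum_max_sub_zero_le_card_mul_sup'_sub _ _ (Finset.mem_univ j)

variable [IsProbabilityMeasure μ]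

lemma variance_sub_le_two_mul_integral_max_sub_zero {Y : Ω → ℝ} (hY : AEMeasurable Y μ) {c : ℝ}
    (hc : ∀ᵐ ω ∂μ, |Y ω - c| ≤ 1) :
    variance Y μ - (c - ∫ ω, Y ω ∂μ) ≤ 2 * ∫ ω, max (Y ω - c) 0 ∂μ := by
  have hYc : Integrable (fun ω => Y ω - c) μ :=
    Integrable.of_bound (by fun_prop) 1 (by simpa only [Real.norm_eq_abs] using hc)
  have hYc_sq : Integrable (fun ω => (Y ω - c) ^ 2) μ :=
    (MemLp.of_bound hYc.aestronglyMeasurable 1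
      (by simpa only [Real.norm_eq_abs] using hc)).integrable_sq
  have hY_int : Integrable Y μ :=
    integrable_add_const_iff.mp (by simpa only [sub_eq_add_neg] using hYc)
  calc variance Y μ - (c - ∫ ω, Y ω ∂μ)
      = variance (fun ω => Y ω - c) μ + ∫ ω, (Y ω - c) ∂μ := by
        rw [variance_sub_const hY.aestronglyMeasurable, integral_sub hY_int (integrable_const c)]
        simp only [integral_const, probReal_univ, smul_eq_mul, one_mul]
        ring
    _ ≤ ∫ ω, (Y ω - c) ^ 2 ∂μ + ∫ ω, (Y ω - c) ∂μ := by
        gcongr; exact variance_le_expectation_sq hYc.aestronglyMeasurable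
    _ = ∫ ω, ((Y ω - c) ^ 2 + (Y ω - c)) ∂μ := (integral_add hYc_sq hYc).symm
    _ ≤ ∫ ω, 2 * max (Y ω - c) 0 ∂μ :=
        integral_mono_ae (hYc_sq.add hYc) (hYc.pos_part.const_mul 2)
          (hc.mono fun ω h => sq_add_le_two_mul_max_zero h)
    _ = 2 * ∫ ω, max (Y ω - c) 0 ∂μ := integral_const_mul _ _

lemma integral_max_sub_integral_le_of_indepFun {X Y : Ω → ℝ} (hXY : IndepFun X Y μ)
    (hX : Integrable X μ) (hY : Integrable Y μ) :
    ∫ ω, max (X ω - ∫ ω', Y ω' ∂μ) 0 ∂μ ≤ ∫ ω, max (X ω - Y ω) 0 ∂μ := by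
  set m := ∫ ω, Y ω ∂μ
  set f : ℝ → ℝ := (Set.Ioi m).indicator 1
  have hXm : Integrable (fun ω => max (X ω - m) 0) μ := (hX.sub (integrable_const m)).pos_part
  have hf : Measurable f := measurable_one.indicator measurableSet_Ioi
  have hf_bdd : ∀ x, ‖f x‖ ≤ 1 := fun x => by
    by_cases hx : x ∈ Set.Ioi m <;> simp [f, hx]
  have hfX : AEStronglyMeasurable (fun ω => f (X ω)) μ :=
    (hf.comp_aemeasurable hX.aemeasurable).aestronglyMeasurable
  have hYm : Integrable (fun ω => Y ω - m) μ := hY.sub (integrable_const m)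
  have hg : Integrable (fun ω => f (X ω) * (Y ω - m)) μ :=
    hYm.bdd_mul hfX (.of_forall fun ω => hf_bdd _)
  -- the correction term has mean zero because `Y - m` is centred and independent of `X`
  have hg_zero : ∫ ω, f (X ω) * (Y ω - m) ∂μ = 0 := by
    have hXY' := hXY.comp (ψ := fun y => y - m) hf (measurable_id.sub_const m)
    refine (hXY'.integral_fun_mul_eq_mul_integral hfX hYm.aestronglyMeasurable).trans ?_
    simp [integral_sub hY (integrable_const m), m]
  have hpt : ∀ ω, max (X ω - m) 0 - f (X ω) * (Y ω - m) ≤ max (X ω - Y ω) 0 := fun ω => by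
    by_cases h : m < X ω
    · simp only [f, Set.indicator_of_mem (Set.mem_Ioi.2 h), Pi.one_apply, one_mul,
        max_eq_left (sub_pos.2 h).le]
      exact (le_of_eq (by ring)).trans (le_max_left _ _)
    · simp only [f, Set.indicator_of_notMem (fun h' => h (Set.mem_Ioi.1 h')), zero_mul, sub_zero,
        max_eq_right (sub_nonpos.2 (not_lt.1 h))]
      exact le_max_right _ _
  calc ∫ ω, max (X ω - m) 0 ∂μ
      = ∫ ω, (max (X ω - m) 0 - f (X ω) * (Y ω - m)) ∂μ := by
        rw [integral_sub hXm hg, hg_zero, sub_zero]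
    _ ≤ ∫ ω, max (X ω - Y ω) 0 ∂μ :=
        integral_mono (hXm.sub hg) (hX.sub hY).pos_part hpt

lemma integral_mem_Icc_zero_one {Y : Ω → ℝ} (hY : AEMeasurable Y μ)
    (h01 : ∀ᵐ ω ∂μ, Y ω ∈ Set.Icc (0 : ℝ) 1) : ∫ ω, Y ω ∂μ ∈ Set.Icc (0 : ℝ) 1 := by
  refine ⟨integral_nonneg_of_ae (h01.mono fun ω h => h.1), ?_⟩
  calc ∫ ω, Y ω ∂μ ≤ ∫ _, (1 : ℝ) ∂μ :=
        integral_mono_ae (.of_mem_Icc 0 1 hY h01) (integrable_const 1) (h01.mono fun ω h => h.2)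
    _ = 1 := by simp

end

theorem dynamic_static_gap_ge_general {Ω : Type*} [MeasurableSpace Ω]
    (μ : Measure Ω) [IsProbabilityMeasure μ] (n : ℕ)
    (X : Fin n → Ω → ℝ) (hmeas : ∀ i, Measurable (X i))
    (hindep : iIndepFun X μ)
    (hX01 : ∀ i, ∀ᵐ ω ∂μ, X i ω ∈ Set.Icc (0:ℝ) 1)
    (istar : Fin n) :
    (∫ ω, Finset.univ.sup' ⟨istar, Finset.mem_univ istar⟩ (fun i => X i ω) ∂μ)
        - ∫ ω, X istar ω ∂μ
      ≥ (1 / (2 * (n:ℝ))) *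
        ∑ i ∈ Finset.univ.filter
            (fun i => 0 < (∫ ω, X istar ω ∂μ) - ∫ ω, X i ω ∂μ),
          max (variance (X i) μ - ((∫ ω, X istar ω ∂μ) - ∫ ω, X i ω ∂μ)) 0 := by
  set m := ∫ ω, X istar ω ∂μ
  have hint i : Integrable (X i) μ := .of_mem_Icc 0 1 (hmeas i).aemeasurable (hX01 i)
  have hm := integral_mem_Icc_zero_one (hmeas istar).aemeasurable (hX01 istar)
  have hgain : ∀ i ∈ Finset.univ.filter (fun i => 0 < m - ∫ ω, X i ω ∂μ),
      max (variance (X i) μ - (m - ∫ ω, X i ω ∂μ)) 0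
        ≤ 2 * ∫ ω, max (X i ω - X istar ω) 0 ∂μ := fun i hi => by
    have hne : i ≠ istar := by rintro rfl; simp [m] at hi
    have hclose : ∀ᵐ ω ∂μ, |X i ω - m| ≤ 1 := (hX01 i).mono fun ω h =>
      abs_le.mpr ⟨by linarith [h.1, hm.2], by linarith [h.2, hm.1]⟩
    refine max_le ?_ (mul_nonneg zero_le_two (integral_nonneg fun ω => le_max_right _ _))
    calc _ ≤ 2 * ∫ ω, max (X i ω - m) 0 ∂μ :=
          variance_sub_le_two_mul_integral_max_sub_zero (hmeas i).aemeasurable hclose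
      _ ≤ 2 * ∫ ω, max (X i ω - X istar ω) 0 ∂μ := mul_le_mul_of_nonneg_left
          (integral_max_sub_integral_le_of_indepFun (hindep.indepFun hne) (hint i) (hint istar))
          zero_le_two
  have hsum := sum_integral_max_sub_zero_le_card_mul hint istar
  rw [Fintype.card_fin] at hsum
  have hn : (0 : ℝ) < n := by exact_mod_cast istar.pos
  rw [ge_iff_le, one_div, inv_mul_le_iff₀ (by positivity)]
  calc _ ≤ ∑ i ∈ Finset.univ.filter (fun i => 0 < m - ∫ ω, X i ω ∂μ),
          2 * ∫ ω, max (X i ω - X istar ω) 0 ∂μ := Finset.sum_le_sum hgain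
    _ ≤ ∑ i, 2 * ∫ ω, max (X i ω - X istar ω) 0 ∂μ :=
        Finset.sum_le_sum_of_subset_of_nonneg (Finset.filter_subset _ _) fun i _ _ =>
          mul_nonneg zero_le_two (integral_nonneg fun ω => le_max_right _ _)
    _ ≤ _ := by rw [← Finset.mul_sum]; linarith

theorem dynamic_static_gap_ge {Ω : Type*} [MeasurableSpace Ω]
    (μ : Measure Ω) [IsProbabilityMeasure μ] (n : ℕ)
    (X : Fin n → Ω → ℝ) (hmeas : ∀ i, Measurable (X i))
    (hindep : iIndepFun X μ)
    (hX01 : ∀ i, ∀ᵐ ω ∂μ, X i ω ∈ Set.Icc (0:ℝ) 1)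
    (istar : Fin n)
    (hstar : ∀ i, ∫ ω, X i ω ∂μ ≤ ∫ ω, X istar ω ∂μ) :
    (∫ ω, Finset.univ.sup' ⟨istar, Finset.mem_univ istar⟩ (fun i => X i ω) ∂μ)
        - ∫ ω, X istar ω ∂μ
      ≥ (1 / (2 * (n:ℝ))) *
        ∑ i ∈ Finset.univ.filter
            (fun i => 0 < (∫ ω, X istar ω ∂μ) - ∫ ω, X i ω ∂μ),
          max (variance (X i) μ - ((∫ ω, X istar ω ∂μ) - ∫ ω, X i ω ∂μ)) 0 :=
  dynamic_static_gap_ge_general μ n X hmeas hindep hX01 istar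
end

section
/- For any two probability measures P and Q on the same measurable space and any event E, P(E^c) + Q(E) ≥ (1/2)·exp(−KL(P ‖ Q)). -/
open MeasureTheory Classical

/-- The Kullback–Leibler divergence between `P` and `Q`, defined as the integral of the
log-likelihood ratio when `P ≪ Q` and the ratio is integrable, and `+∞` otherwise,
encoded as an `EReal`. -/

noncomputable def klDiv {Ω : Type*} [MeasurableSpace Ω] (P Q : Measure Ω) : EReal :=
  if P ≪ Q ∧ Integrable (llr P Q) P then ((∫ ω, llr P Q ω ∂P : ℝ) : EReal) else ⊤

/-!
Let `BC = ∫ √(dQ/dP) dP` be the Bhattacharyya coefficient. Jensen's inequality for `exp` gives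
`exp (-KL(P‖Q) / 2) ≤ BC`. Splitting the integral over `E` and `Eᶜ` and applying Cauchy–Schwarz on
each piece gives `BC ≤ √(Q E)·√(P E) + √(P Eᶜ)·√(Q Eᶜ)`, and Cauchy–Schwarz in `ℝ²` then gives
`BC² ≤ (Q E + P Eᶜ)(P E + Q Eᶜ) ≤ 2 (P Eᶜ + Q E)`.
-/

open scoped ENNReal

section

variable {Ω : Type*} [MeasurableSpace Ω] {P Q : Measure Ω}

lemma absolutelyContinuous_and_integrable_llr_of_klDiv_ne_top (h : klDiv P Q ≠ ⊤) :
    P ≪ Q ∧ Integrable (llr P Q) P := by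
  by_contra hc
  exact h (if_neg hc)

lemma klDiv_of_absolutelyContinuous_of_integrable (hPQ : P ≪ Q) (hint : Integrable (llr P Q) P) :
    klDiv P Q = ((∫ ω, llr P Q ω ∂P : ℝ) : EReal) :=
  if_pos ⟨hPQ, hint⟩

/-- `∫ √(dP dQ)`, written through the density of `Q` w.r.t. `P`: the singular part of `Q`
contributes nothing to it. -/
noncomputable def bhattacharyyaCoeff (P Q : Measure Ω) : ℝ≥0∞ :=
  ∫⁻ ω, Q.rnDeriv P ω ^ (1 / 2 : ℝ) ∂P

lemma setLIntegral_rpow_rnDeriv_half_le (P Q : Measure Ω) (s : Set Ω) :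
    ∫⁻ ω in s, Q.rnDeriv P ω ^ (1 / 2 : ℝ) ∂P ≤ Q s ^ (1 / 2 : ℝ) * P s ^ (1 / 2 : ℝ) := by
  have hcs := ENNReal.lintegral_mul_le_Lp_mul_Lq (P.restrict s) Real.HolderConjugate.two_two
    ((Q.measurable_rnDeriv P).pow_const (1 / 2 : ℝ)).aemeasurable aemeasurable_const
    (g := fun _ => 1)
  have hsq : ∀ ω, (Q.rnDeriv P ω ^ (1 / 2 : ℝ)) ^ (2 : ℝ) = Q.rnDeriv P ω := fun ω => by
    rw [← ENNReal.rpow_mul]; norm_num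
  simp only [Pi.mul_apply, mul_one, ENNReal.one_rpow, lintegral_one,
    Measure.restrict_apply_univ, hsq] at hcs
  calc _ ≤ _ := hcs
    _ ≤ _ := by gcongr; exact Measure.setLIntegral_rnDeriv_le s

lemma bhattacharyyaCoeff_le_add_compl (P Q : Measure Ω) {s : Set Ω} (hs : MeasurableSet s) :
    bhattacharyyaCoeff P Q ≤
      Q s ^ (1 / 2 : ℝ) * P s ^ (1 / 2 : ℝ) + Q sᶜ ^ (1 / 2 : ℝ) * P sᶜ ^ (1 / 2 : ℝ) := by
  rw [bhattacharyyaCoeff, ← lintegral_add_compl _ hs]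
  exact add_le_add (setLIntegral_rpow_rnDeriv_half_le P Q s)
    (setLIntegral_rpow_rnDeriv_half_le P Q sᶜ)

lemma bhattacharyyaCoeff_ne_top (P Q : Measure Ω) [IsFiniteMeasure P] [IsFiniteMeasure Q] :
    bhattacharyyaCoeff P Q ≠ ⊤ := by
  have h := setLIntegral_rpow_rnDeriv_half_le P Q Set.univ
  rw [Measure.restrict_univ] at h
  exact ne_top_of_le_ne_top (by finiteness) h

lemma toReal_bhattacharyyaCoeff_le_add_compl (P Q : Measure Ω) [IsFiniteMeasure P]
    [IsFiniteMeasure Q] {s : Set Ω} (hs : MeasurableSet s) :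
    (bhattacharyyaCoeff P Q).toReal ≤
      √(Q s).toReal * √(P s).toReal + √(Q sᶜ).toReal * √(P sᶜ).toReal := by
  refine (ENNReal.toReal_mono (by finiteness) (bhattacharyyaCoeff_le_add_compl P Q hs)).trans_eq ?_
  rw [ENNReal.toReal_add (by finiteness) (by finiteness)]
  simp only [ENNReal.toReal_mul, ← ENNReal.toReal_rpow, Real.sqrt_eq_rpow]

lemma exp_neg_half_llr_ae_eq [SigmaFinite P] [SigmaFinite Q] (hPQ : P ≪ Q) :
    (fun ω => Real.exp (-llr P Q ω / 2)) =ᵐ[P]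
      fun ω => (Q.rnDeriv P ω ^ (1 / 2 : ℝ)).toReal := by
  filter_upwards [exp_neg_llr hPQ] with ω hω
  rw [Real.exp_half, hω, Real.sqrt_eq_rpow, ENNReal.toReal_rpow]

lemma exp_neg_half_integral_llr_le_bhattacharyyaCoeff [IsProbabilityMeasure P]
    [IsFiniteMeasure Q] (hPQ : P ≪ Q) (hint : Integrable (llr P Q) P) :
    Real.exp (-(∫ ω, llr P Q ω ∂P) / 2) ≤ (bhattacharyyaCoeff P Q).toReal := by
  have hmeas : AEMeasurable (fun ω => Q.rnDeriv P ω ^ (1 / 2 : ℝ)) P :=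
    ((Q.measurable_rnDeriv P).pow_const _).aemeasurable
  have hexp_int : Integrable (fun ω => Real.exp (-llr P Q ω / 2)) P :=
    (integrable_toReal_of_lintegral_ne_top hmeas (bhattacharyyaCoeff_ne_top P Q)).congr
      (exp_neg_half_llr_ae_eq hPQ).symm
  have hjensen := convexOn_exp.map_integral_le Real.continuous_exp.continuousOn isClosed_univ
    (Filter.Eventually.of_forall fun _ => Set.mem_univ _) (hint.neg.div_const 2) hexp_int
  have hfinite : ∀ᵐ ω ∂P, Q.rnDeriv P ω ^ (1 / 2 : ℝ) < ∞ := by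
    filter_upwards [Measure.rnDeriv_lt_top Q P] with ω hω
    exact ENNReal.rpow_lt_top_of_nonneg (by norm_num) hω.ne
  calc Real.exp (-(∫ ω, llr P Q ω ∂P) / 2)
      = Real.exp (∫ ω, -llr P Q ω / 2 ∂P) := by rw [integral_div, integral_neg]
    _ ≤ ∫ ω, Real.exp (-llr P Q ω / 2) ∂P := hjensen
    _ = (bhattacharyyaCoeff P Q).toReal := by
      rw [integral_congr_ae (exp_neg_half_llr_ae_eq hPQ), integral_toReal hmeas hfinite]
      rfl

end

lemma sq_sqrt_mul_add_sqrt_mul_le {x y z w : ℝ} (hx : 0 ≤ x) (hy : 0 ≤ y) (hz : 0 ≤ z)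
    (hw : 0 ≤ w) : (√x * √y + √z * √w) ^ 2 ≤ (x + z) * (y + w) := by
  nlinarith [sq_nonneg (√x * √w - √z * √y), Real.sq_sqrt hx, Real.sq_sqrt hy, Real.sq_sqrt hz,
    Real.sq_sqrt hw]

/-- Bretagnolle–Huber inequality: `P(Eᶜ) + Q(E) ≥ (1/2)·exp(−KL(P‖Q))`, with the convention
`exp(−∞) = 0`. -/
theorem bretagnolle_huber {Ω : Type*} [MeasurableSpace Ω]
    (P Q : Measure Ω) [IsProbabilityMeasure P] [IsProbabilityMeasure Q]
    (E : Set Ω) (hE : MeasurableSet E) :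
    (P Eᶜ).toReal + (Q E).toReal
      ≥ (1/2) * (if klDiv P Q = ⊤ then 0 else Real.exp (-(klDiv P Q).toReal)) := by
  rw [ge_iff_le]
  split_ifs with hKL
  · rw [mul_zero]; positivity
  obtain ⟨hPQ, hint⟩ := absolutelyContinuous_and_integrable_llr_of_klDiv_ne_top hKL
  rw [klDiv_of_absolutelyContinuous_of_integrable hPQ hint, EReal.toReal_coe]
  have hBC := (exp_neg_half_integral_llr_le_bhattacharyyaCoeff hPQ hint).trans
    (toReal_bhattacharyyaCoeff_le_add_compl P Q hE)
  have hPE : (P E).toReal ≤ 1 := measureReal_le_one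
  have hQEc : (Q Eᶜ).toReal ≤ 1 := measureReal_le_one
  suffices Real.exp (-∫ ω, llr P Q ω ∂P) ≤ ((Q E).toReal + (P Eᶜ).toReal) * 2 by linarith
  calc Real.exp (-∫ ω, llr P Q ω ∂P) = Real.exp (-(∫ ω, llr P Q ω ∂P) / 2) ^ 2 := by
        rw [← Real.exp_nat_mul]; ring_nf
    _ ≤ (√(Q E).toReal * √(P E).toReal + √(P Eᶜ).toReal * √(Q Eᶜ).toReal) ^ 2 := by
        gcongr; linarith [mul_comm √(Q Eᶜ).toReal √(P Eᶜ).toReal]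
    _ ≤ ((Q E).toReal + (P Eᶜ).toReal) * ((P E).toReal + (Q Eᶜ).toReal) :=
        sq_sqrt_mul_add_sqrt_mul_le (by positivity) (by positivity) (by positivity) (by positivity)
    _ ≤ ((Q E).toReal + (P Eᶜ).toReal) * 2 := by gcongr; linarith
end

section
/- Let 0 < ε < p ≤ 1/4 with p − ε = 2Δ for some Δ > 0. Then KL(Be(p) ‖ Be(ε)) ≤ 8Δ²/ε, where Be(q) denotes the Bernoulli distribution with parameter q and KL(Be(p)‖Be(q)) = p·log(p/q) + (1−p)·log((1−p)/(1−q)). -/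
/-! KL divergence is dominated by the χ²-divergence, by `log x ≤ x - 1` applied to each of the
two terms; for Bernoulli laws the χ²-divergence is `(p - ε)² / (ε (1 - ε))`, and `1 - ε ≥ 1/2`. -/

open Real

lemma mul_log_div_le_mul_div_sub_one {a b : ℝ} (ha : 0 ≤ a) (hb : 0 < b) :
    a * log (a / b) ≤ a * (a / b - 1) := by
  rcases ha.eq_or_lt with rfl | ha
  · simp
  · exact mul_le_mul_of_nonneg_left (log_le_sub_one_of_pos (div_pos ha hb)) ha.le

lemma bernoulli_chiSq_eq {p q : ℝ} (hq0 : 0 < q) (hq1 : q < 1) :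
    p * (p / q - 1) + (1 - p) * ((1 - p) / (1 - q) - 1) = (p - q) ^ 2 / (q * (1 - q)) := by
  have : 1 - q ≠ 0 := by linarith
  field_simp
  ring

lemma bernoulli_kl_le_chiSq {p q : ℝ} (hp0 : 0 ≤ p) (hp1 : p ≤ 1) (hq0 : 0 < q) (hq1 : q < 1) :
    p * log (p / q) + (1 - p) * log ((1 - p) / (1 - q)) ≤ (p - q) ^ 2 / (q * (1 - q)) := by
  rw [← bernoulli_chiSq_eq hq0 hq1]
  gcongr ?_ + ?_
  · exact mul_log_div_le_mul_div_sub_one hp0 hq0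
  · exact mul_log_div_le_mul_div_sub_one (by linarith) (by linarith)

theorem bernoulli_kl_bound_general (p ε Δ : ℝ) (hε : 0 < ε) (hεp : ε < p) (hp : p ≤ 1/4)
    (hgap : p - ε = 2 * Δ) :
    p * Real.log (p / ε) + (1 - p) * Real.log ((1 - p) / (1 - ε))
      ≤ 8 * Δ^2 / ε := by
  have hε1 : 1 / 2 ≤ 1 - ε := by linarith
  calc p * log (p / ε) + (1 - p) * log ((1 - p) / (1 - ε))
      ≤ (p - ε) ^ 2 / (ε * (1 - ε)) :=
        bernoulli_kl_le_chiSq (by linarith) (by linarith) hε (by linarith)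
    _ ≤ (p - ε) ^ 2 / (ε * (1 / 2)) := by gcongr
    _ = 8 * Δ ^ 2 / ε := by
        rw [hgap]
        field_simp
        ring

theorem bernoulli_kl_bound (p ε Δ : ℝ) (hε : 0 < ε) (hεp : ε < p) (hp : p ≤ 1/4)
    (hΔ : 0 < Δ) (hgap : p - ε = 2 * Δ) :
    p * Real.log (p / ε) + (1 - p) * Real.log ((1 - p) / (1 - ε))
      ≤ 8 * Δ^2 / ε :=
  bernoulli_kl_bound_general p ε Δ hε hεp hp hgap
end
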